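/- arXiv:2510.21478 — 5 statements merged into one kernel-verified Lean document; each statement's English description precedes it below -/
import Mathlib

section
/- Let F : ℝ^d → ℝ^d be Lipschitz, let v : ℝ^d → ℝ^d be bounded Borel, and let Y : [0,1] → ℝ^d be an absolutely continuous curve with Y'(s) = v(Y(s)) for a.e. s. Then for a.e. s ∈ [0,1] such that s is a Lebesgue point of r ↦ v(Y(r)) and F is differentiable at Y(s) in the direction v(Y(s)), the map s ↦ F(Y(s)) is differentiable at s with derivative DF(Y(s))[v(Y(s))]. -/
open MeasureTheory Set Filter Topology

/-!
At a Lebesgue point `s` of `g = v ∘ Y` the curve `Y` is differentiable with `Y' s = g s`, because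
`Y (s + h) - Y s - h • g s = ∫ r in s..s + h, (g r - g s)`. A Lipschitz `F` turns the
`o(h)` error `Y (s + h) - (Y s + h • g s)` into an `o(h)` error in
`F (Y (s + h)) - F (Y s + h • g s)`, so the derivative of `F ∘ Y` at `s` is the derivative
of `F` at `Y s` in the direction `g s`.
-/

theorem LipschitzWith.hasDerivAt_comp_of_hasLineDerivAt {𝕜 E G : Type*}
    [NontriviallyNormedField 𝕜] [NormedAddCommGroup E] [NormedSpace 𝕜 E]
    [NormedAddCommGroup G] [NormedSpace 𝕜 G] {K : NNReal} {F : E → G} {γ : 𝕜 → E}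
    {s : 𝕜} {c : E} {L : G} (hF : LipschitzWith K F) (hγ : HasDerivAt γ c s)
    (hFc : HasLineDerivAt 𝕜 F L (γ s) c) : HasDerivAt (fun t => F (γ t)) L s := by
  rw [hasDerivAt_iff_isLittleO_nhds_zero] at hγ ⊢
  rw [hasLineDerivAt_iff_isLittleO_nhds_zero] at hFc
  have hlip : (fun t => F (γ (s + t)) - F (γ s + t • c)) =O[𝓝 0]
      fun t => γ (s + t) - γ s - t • c :=
    Asymptotics.IsBigO.of_bound K <| Eventually.of_forall fun t => by
      simpa [dist_eq_norm, sub_sub] using hF.dist_le_mul (γ (s + t)) (γ s + t • c)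
  exact ((hlip.trans_isLittleO hγ).add hFc).congr_left fun t => by abel

theorem hasDerivAt_of_sub_eq_intervalIntegral {E : Type*} [NormedAddCommGroup E]
    [NormedSpace ℝ E] [CompleteSpace E] {Y g : ℝ → E} {s : ℝ}
    (hg : ∀ᶠ b in 𝓝 s, IntervalIntegrable g volume s b)
    (hY : ∀ᶠ b in 𝓝 s, Y b - Y s = ∫ r in s..b, g r)
    (hs : Tendsto (fun h : ℝ => |h|⁻¹ * |∫ r in s..(s + h), ‖g r - g s‖|)
      (𝓝[≠] 0) (𝓝 0)) :
    HasDerivAt Y (g s) s := by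
  rw [hasDerivAt_iff_tendsto_slope_zero, tendsto_iff_norm_sub_tendsto_zero]
  refine squeeze_zero_norm' ?_ hs
  have hshift : Tendsto (fun h : ℝ => s + h) (𝓝[≠] 0) (𝓝 s) :=
    tendsto_nhdsWithin_of_tendsto_nhds (by simpa using (continuous_const_add s).tendsto 0)
  filter_upwards [hshift.eventually hg, hshift.eventually hY, self_mem_nhdsWithin]
    with h hgh hYh hh
  have hsub : h⁻¹ • (Y (s + h) - Y s) - g s = h⁻¹ • ∫ r in s..(s + h), (g r - g s) := by
    rw [intervalIntegral.integral_sub hgh intervalIntegrable_const, hYh,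
      intervalIntegral.integral_const, add_sub_cancel_left, smul_sub, inv_smul_smul₀ hh]
  rw [norm_norm, hsub, norm_smul, norm_inv, Real.norm_eq_abs]
  gcongr
  exact intervalIntegral.norm_integral_le_abs_integral_norm

section PrimitiveOnSet

variable {E : Type*} [NormedAddCommGroup E] [NormedSpace ℝ E] {Y g : ℝ → E} {S : Set ℝ}

theorem sub_eq_intervalIntegral_of_forall_le
    (hY : ∀ a ∈ S, ∀ b ∈ S, a ≤ b → Y b - Y a = ∫ r in a..b, g r) {a b : ℝ}
    (ha : a ∈ S) (hb : b ∈ S) : Y b - Y a = ∫ r in a..b, g r := by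
  rcases le_total a b with hab | hba
  · exact hY a ha b hb hab
  · rw [intervalIntegral.integral_symm, ← hY b hb a ha hba, neg_sub]

theorem lipschitzOnWith_of_sub_eq_intervalIntegral {C : ℝ} (hgC : ∀ r, ‖g r‖ ≤ C)
    (hY : ∀ a ∈ S, ∀ b ∈ S, a ≤ b → Y b - Y a = ∫ r in a..b, g r) :
    LipschitzOnWith C.toNNReal Y S := by
  refine LipschitzOnWith.of_dist_le_mul fun b hb a ha => ?_
  rw [dist_eq_norm, sub_eq_intervalIntegral_of_forall_le hY ha hb, Real.dist_eq, Real.coe_toNNReal']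
  exact intervalIntegral.norm_integral_le_of_norm_le_const fun r _ =>
    (hgC r).trans (le_max_left _ _)

end PrimitiveOnSet

theorem integrableOn_Icc_comp_of_continuousOn {E G : Type*} [TopologicalSpace E]
    [MeasurableSpace E] [BorelSpace E] [NormedAddCommGroup G] [MeasurableSpace G]
    [BorelSpace G] [SecondCountableTopology G] {v : E → G} {Y : ℝ → E} {C a b : ℝ}
    (hv : Measurable v) (hvC : ∀ x, ‖v x‖ ≤ C) (hY : ContinuousOn Y (Icc a b)) :
    IntegrableOn (fun r => v (Y r)) (Icc a b) :=
  Integrable.of_bound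
    (hv.comp_aemeasurable (hY.aemeasurable measurableSet_Icc)).aestronglyMeasurable C
    (Eventually.of_forall fun r => hvC (Y r))

/-- Let `F` be Lipschitz, `v` bounded Borel, and `Y : [0,1] → ℝ^d`
absolutely continuous with `Y' = v(Y)` a.e. Then for a.e. `s ∈ [0,1]` such that
`s` is a Lebesgue point of `r ↦ v(Y(r))` and `F` is differentiable at `Y(s)` in
the direction `v(Y(s))` (with directional derivative `L`), the map
`s ↦ F(Y(s))` is differentiable at `s` with derivative `L = DF(Y(s))[v(Y(s))]`. -/
theorem chain_rule_along_flow_at_lebesgue_points (d : ℕ) (K : NNReal) (C : ℝ)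
    (F : (Fin d → ℝ) → (Fin d → ℝ)) (v : (Fin d → ℝ) → (Fin d → ℝ))
    (Y : ℝ → (Fin d → ℝ))
    (hF : LipschitzWith K F)
    (hvmeas : Measurable v) (hvbdd : ∀ x, ‖v x‖ ≤ C)
    (hY : ∀ a b : ℝ, 0 ≤ a → a ≤ b → b ≤ 1 →
      Y b - Y a = ∫ r in a..b, v (Y r)) :
    ∀ᵐ s ∂(volume.restrict (Icc (0:ℝ) 1)), ∀ L : Fin d → ℝ,
      Tendsto (fun h : ℝ => |h|⁻¹ * |∫ r in s..(s+h), ‖v (Y r) - v (Y s)‖|)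
        (nhdsWithin 0 {0}ᶜ) (nhds 0) →
      Tendsto (fun h : ℝ => h⁻¹ • (F (Y s + h • v (Y s)) - F (Y s)))
        (nhdsWithin 0 {0}ᶜ) (nhds L) →
      HasDerivAt (fun r => F (Y r)) L s := by
  have hYprim : ∀ a ∈ Icc (0:ℝ) 1, ∀ b ∈ Icc (0:ℝ) 1, a ≤ b →
      Y b - Y a = ∫ r in a..b, v (Y r) := fun a ha b hb hab => hY a b ha.1 hab hb.2
  have hvY : IntegrableOn (fun r => v (Y r)) (Icc 0 1) :=
    integrableOn_Icc_comp_of_continuousOn hvmeas hvbdd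
      (lipschitzOnWith_of_sub_eq_intervalIntegral (fun r => hvbdd (Y r)) hYprim).continuousOn
  have hinterior : ∀ᵐ s ∂(volume.restrict (Icc (0:ℝ) 1)), s ∈ Ioo (0:ℝ) 1 := by
    rw [← Measure.restrict_congr_set Ioo_ae_eq_Icc]
    exact ae_restrict_mem measurableSet_Ioo
  filter_upwards [hinterior] with s hs L hLeb hdir
  have hsI : s ∈ Icc (0:ℝ) 1 := Ioo_subset_Icc_self hs
  have hnhds : Icc (0:ℝ) 1 ∈ 𝓝 s := Icc_mem_nhds hs.1 hs.2
  have hYs : HasDerivAt Y (v (Y s)) s :=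
    hasDerivAt_of_sub_eq_intervalIntegral
      (mem_of_superset hnhds fun b hb =>
        (hvY.mono_set (uIcc_subset_Icc hsI hb)).intervalIntegrable)
      (mem_of_superset hnhds fun b hb => sub_eq_intervalIntegral_of_forall_le hYprim hsI hb) hLeb
  exact hF.hasDerivAt_comp_of_hasLineDerivAt hYs (hasLineDerivAt_iff_tendsto_slope_zero.2 hdir)
end

section
/- Let b : ℝ^d → ℝ^d be Lipschitz and bounded with flow X and density ρ (i.e. (X_t)_# ℒ^d = ρ_t ℒ^d), let v : ℝ^d → ℝ^d be bounded with a regular Lagrangian flow Y satisfying (Y_s)_# ℒ^d ≤ C ℒ^d for all s ∈ [0,1]. Then for each fixed t, the map Z_s := X_{−t} ∘ Y_s ∘ X_t satisfies (Z_s)_# ℒ^d ≤ C' ℒ^d for a constant C' depending only on C, t, and ‖div b‖_∞. -/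
open MeasureTheory Set

/-- If `b` is Lipschitz bounded with flow `X` and density `ρ`
(`(X_t)_# ℒ^d = ρ_t ℒ^d` with `e^{−M|t|} ≤ ρ_t ≤ e^{M|t|}` a.e., `M = ‖div b‖_∞`),
and `Y` is a regular Lagrangian flow of a bounded field `v` with compressibility
constant `C`, then `Z_s := X_{−t} ∘ Y_s ∘ X_t` satisfies `(Z_s)_# ℒ^d ≤ C' ℒ^d`
with `C' = C e^{2M|t|}` depending only on `C`, `t` and `‖div b‖_∞`. -/
theorem conjugated_flow_pushforward_bound (d : ℕ) (K : NNReal) (Cb Cv M C : ℝ)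
    (b v : (Fin d → ℝ) → (Fin d → ℝ))
    (X : ℝ → (Fin d → ℝ) → (Fin d → ℝ)) (Y : ℝ → (Fin d → ℝ) → (Fin d → ℝ))
    (ρ : ℝ → (Fin d → ℝ) → ℝ)
    (hb : LipschitzWith K b) (hbbdd : ∀ x, ‖b x‖ ≤ Cb) (hvbdd : ∀ x, ‖v x‖ ≤ Cv)
    (hflow : ∀ t x, HasDerivAt (fun s => X s x) (b (X t x)) t)
    (hX0 : ∀ x, X 0 x = x)
    (hXgroup : ∀ t s x, X t (X s x) = X (t + s) x)
    (hXmeas : ∀ t, Measurable (X t)) (hYmeas : ∀ s, Measurable (Y s))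
    (hXmap : ∀ t, Measure.map (X t) (volume : Measure (Fin d → ℝ))
      = volume.withDensity (fun x => ENNReal.ofReal (ρ t x)))
    (hρbound : ∀ t, ∀ᵐ x ∂(volume : Measure (Fin d → ℝ)),
      Real.exp (-(M * |t|)) ≤ ρ t x ∧ ρ t x ≤ Real.exp (M * |t|))
    (hYode : ∀ᵐ x ∂(volume : Measure (Fin d → ℝ)), Y 0 x = x ∧
      ∀ a c : ℝ, 0 ≤ a → a ≤ c → c ≤ 1 →
        Y c x - Y a x = ∫ r in a..c, v (Y r x))
    (hYpush : ∀ s ∈ Icc (0:ℝ) 1, ∀ A : Set (Fin d → ℝ), MeasurableSet A →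
      volume ((Y s) ⁻¹' A) ≤ ENNReal.ofReal C * volume A)
    (t : ℝ) :
    ∀ s ∈ Icc (0:ℝ) 1, ∀ A : Set (Fin d → ℝ), MeasurableSet A →
      volume ((fun x => X (-t) (Y s (X t x))) ⁻¹' A)
        ≤ ENNReal.ofReal (C * Real.exp (2 * M * |t|)) * volume A := by
  intro s hs A hA
  -- key estimate for X
  have key : ∀ τ : ℝ, ∀ S : Set (Fin d → ℝ), MeasurableSet S →
      volume (X τ ⁻¹' S) ≤ ENNReal.ofReal (Real.exp (M * |τ|)) * volume S := by
    intro τ S hS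
    have h1 : volume (X τ ⁻¹' S) = (Measure.map (X τ) volume) S :=
      (Measure.map_apply (hXmeas τ) hS).symm
    rw [hXmap τ, withDensity_apply _ hS] at h1
    rw [h1]
    calc ∫⁻ x in S, ENNReal.ofReal (ρ τ x)
        ≤ ∫⁻ _ in S, ENNReal.ofReal (Real.exp (M * |τ|)) := by
          refine lintegral_mono_ae ?_
          filter_upwards [ae_restrict_of_ae (hρbound τ)] with x hx
          exact ENNReal.ofReal_le_ofReal hx.2
      _ = ENNReal.ofReal (Real.exp (M * |τ|)) * volume S := by
          simp [Measure.restrict_apply_univ]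
  set B : Set (Fin d → ℝ) := X (-t) ⁻¹' A with hB
  have hBmeas : MeasurableSet B := (hXmeas (-t)) hA
  have hBYmeas : MeasurableSet (Y s ⁻¹' B) := (hYmeas s) hBmeas
  have step1 : volume ((fun x => X (-t) (Y s (X t x))) ⁻¹' A)
      ≤ ENNReal.ofReal (Real.exp (M * |t|)) * volume (Y s ⁻¹' B) := by
    have : (fun x => X (-t) (Y s (X t x))) ⁻¹' A = X t ⁻¹' (Y s ⁻¹' B) := rfl
    rw [this]
    exact key t _ hBYmeas
  have step2 : volume (Y s ⁻¹' B) ≤ ENNReal.ofReal C * volume B :=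
    hYpush s hs B hBmeas
  have step3 : volume B ≤ ENNReal.ofReal (Real.exp (M * |t|)) * volume A := by
    have := key (-t) A hA
    simpa [abs_neg] using this
  have hE : ENNReal.ofReal (C * Real.exp (2 * M * |t|))
      = ENNReal.ofReal (Real.exp (M * |t|)) * (ENNReal.ofReal C *
        ENNReal.ofReal (Real.exp (M * |t|))) := by
    have h2 : Real.exp (2 * M * |t|) = Real.exp (M * |t|) * Real.exp (M * |t|) := by
      rw [← Real.exp_add]; ring_nf
    rw [h2, ENNReal.ofReal_mul' (by positivity : (0:ℝ) ≤ Real.exp (M * |t|) * Real.exp (M * |t|)),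
      ENNReal.ofReal_mul (Real.exp_nonneg _)]
    ring
  calc volume ((fun x => X (-t) (Y s (X t x))) ⁻¹' A)
      ≤ ENNReal.ofReal (Real.exp (M * |t|)) * volume (Y s ⁻¹' B) := step1
    _ ≤ ENNReal.ofReal (Real.exp (M * |t|)) * (ENNReal.ofReal C * volume B) :=
        mul_le_mul_right step2 _
    _ ≤ ENNReal.ofReal (Real.exp (M * |t|)) * (ENNReal.ofReal C *
        (ENNReal.ofReal (Real.exp (M * |t|)) * volume A)) :=
        mul_le_mul_right (mul_le_mul_right step3 _) _
    _ = ENNReal.ofReal (C * Real.exp (2 * M * |t|)) * volume A := by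
        rw [hE]; ring
end

section
/- Let b be Lipschitz and bounded with flow X, and let v be a bounded vector field with unique regular Lagrangian flow Y. Suppose that for every t ∈ [0,1], (∇X_t · v)(X_{−t}(x)) = v(x) for a.e. x ∈ ℝ^d. Then for a.e. y and a.e. s ∈ [0,1], the map s ↦ X_t(Y_s(y)) is differentiable with derivative v(X_t(Y_s(y))). -/
/-!
The invariance hypothesis says that `∇X_t` maps `v` to `v ∘ X_t` off a null set `N`. The
compressibility of the regular Lagrangian flow `Y` and Fubini show that for a.e. `y` the
trajectory `s ↦ Y_s(y)` meets `N` only at a null set of times; at the remaining times where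
`s ↦ Y_s(y)` has derivative `v(Y_s(y))` (a.e. `s`, by Lebesgue differentiation), the chain rule
gives the claim.
-/

open MeasureTheory Set Filter Function Topology

section Primitive

variable {E : Type*} [NormedAddCommGroup E] [NormedSpace ℝ E]

/-- No integrability of `g` is assumed: the junk value `0` of a non-integrable integral obeys
the same bound. -/
theorem lipschitzOnWith_of_sub_eq_integral {g φ : ℝ → E} {a b C : ℝ} (hgC : ∀ r, ‖g r‖ ≤ C)
    (hφ : ∀ a' c, a ≤ a' → a' ≤ c → c ≤ b → φ c - φ a' = ∫ r in a'..c, g r) :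
    LipschitzOnWith C.toNNReal φ (Icc a b) := by
  have hle : ∀ x ∈ Icc a b, ∀ y ∈ Icc a b, x ≤ y → dist (φ x) (φ y) ≤ C * dist x y := by
    intro x hx y hy hxy
    rw [dist_comm, dist_eq_norm, hφ x y hx.1 hxy hy.2, Real.dist_eq, abs_sub_comm]
    exact intervalIntegral.norm_integral_le_of_norm_le_const fun r _ => hgC r
  refine LipschitzOnWith.of_dist_le_mul fun x hx y hy => ?_
  rw [Real.coe_toNNReal _ ((norm_nonneg _).trans (hgC 0))]
  rcases le_total x y with hxy | hyx
  · exact hle x hx y hy hxy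
  · rw [dist_comm, dist_comm x]
    exact hle y hy x hx hyx

theorem ae_hasDerivAt_of_sub_eq_integral [CompleteSpace E] {g φ : ℝ → E} {a b : ℝ}
    (hg : IntervalIntegrable g volume a b) (hφ : ∀ c ∈ Icc a b, φ c - φ a = ∫ r in a..c, g r) :
    ∀ᵐ s ∂volume.restrict (Icc a b), HasDerivAt φ (g s) s := by
  have hIoo : ∀ᵐ s ∂volume.restrict (Icc a b), s ∈ Ioo a b := by
    rw [← Measure.restrict_congr_set Ioo_ae_eq_Icc]
    exact ae_restrict_mem measurableSet_Ioo
  filter_upwards [hIoo, ae_restrict_of_ae hg.ae_hasDerivAt_integral] with s hs hderiv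
  have hprim : φ =ᶠ[𝓝 s] fun c => φ a + ∫ r in a..c, g r := by
    filter_upwards [isOpen_Ioo.mem_nhds hs] with c hc
    rw [← hφ c (Ioo_subset_Icc_self hc), add_sub_cancel]
  exact ((hderiv (Icc_subset_uIcc (Ioo_subset_Icc_self hs)) a left_mem_uIcc).const_add
    (φ a)).congr_of_eventuallyEq hprim

end Primitive

open scoped Classical in
theorem ae_ae_mem_of_forall_ae_mem {α E : Type*} [MeasurableSpace α] {μ : Measure α} [SFinite μ]
    [TopologicalSpace E] [TopologicalSpace.PseudoMetrizableSpace E] [MeasurableSpace E]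
    [BorelSpace E]
    {Y : ℝ → α → E} {a b : ℝ} (hab : a ≤ b) {G : Set α} {N : Set E}
    (hY : ∀ s, Measurable (Y s)) (hG : MeasurableSet G) (hGae : ∀ᵐ y ∂μ, y ∈ G)
    (hcont : ∀ y ∈ G, ContinuousOn (fun s => Y s y) (Icc a b)) (hN : MeasurableSet N)
    (hYN : ∀ s ∈ Icc a b, ∀ᵐ y ∂μ, Y s y ∈ N) :
    ∀ᵐ y ∂μ, ∀ᵐ s ∂volume.restrict (Icc a b), Y s y ∈ N := by
  -- Clamping time to `[a, b]` and freezing the trajectories outside `G` makes every trajectory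
  -- continuous, so the modified flow is jointly measurable (Carathéodory).
  set Z : ℝ → α → E := fun s y => if y ∈ G then Y (projIcc a b hab s) y else Y a y
  have hZY : ∀ y ∈ G, ∀ s ∈ Icc a b, Z s y = Y s y := fun y hy s hs => by
    simp only [Z, if_pos hy, projIcc_of_mem hab hs]
  have hZcont : ∀ y, Continuous fun s => Z s y := by
    intro y
    by_cases hy : y ∈ G
    · simp only [Z, if_pos hy]
      exact (hcont y hy).comp_continuous (continuous_subtype_val.comp continuous_projIcc)
        fun s => (projIcc a b hab s).2
    · simp only [Z, if_neg hy]
      exact continuous_const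
  have hZ : Measurable (uncurry Z) :=
    measurable_uncurry_of_continuous_of_measurable hZcont fun s => (hY _).ite hG (hY a)
  have hZN : ∀ᵐ s ∂volume.restrict (Icc a b), ∀ᵐ y ∂μ, Z s y ∈ N := by
    filter_upwards [ae_restrict_mem measurableSet_Icc] with s hs
    filter_upwards [hGae, hYN s hs] with y hy hyN
    rwa [hZY y hy s hs]
  have hZN' := (Measure.ae_ae_comm (p := fun s y => Z s y ∈ N) (hZ hN)).1 hZN
  filter_upwards [hGae, hZN'] with y hy hyZ
  filter_upwards [hyZ, ae_restrict_mem measurableSet_Icc] with s hs hsI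
  rwa [← hZY y hy s hsI]

theorem flow_image_of_integral_curves_general (d : ℕ) (Cv C : ℝ)
    (v : (Fin d → ℝ) → (Fin d → ℝ))
    (X : ℝ → (Fin d → ℝ) → (Fin d → ℝ)) (Y : ℝ → (Fin d → ℝ) → (Fin d → ℝ))
    (hvbdd : ∀ x, ‖v x‖ ≤ Cv)
    (hvmeas : Measurable v)
    (hYmeas : ∀ s, Measurable (Y s))
    (hYode : ∀ᵐ y ∂(volume : Measure (Fin d → ℝ)), Y 0 y = y ∧
      ∀ a c : ℝ, 0 ≤ a → a ≤ c → c ≤ 1 →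
        Y c y - Y a y = ∫ r in a..c, v (Y r y))
    (hYpush : ∀ s ∈ Icc (0:ℝ) 1, ∀ A : Set (Fin d → ℝ), MeasurableSet A →
      volume ((Y s) ⁻¹' A) ≤ ENNReal.ofReal C * volume A)
    (hinv : ∀ t ∈ Icc (0:ℝ) 1, ∀ᵐ x ∂(volume : Measure (Fin d → ℝ)),
      DifferentiableAt ℝ (X t) x ∧ fderiv ℝ (X t) x (v x) = v (X t x)) :
    ∀ t ∈ Icc (0:ℝ) 1, ∀ᵐ y ∂(volume : Measure (Fin d → ℝ)),
      ∀ᵐ s ∂(volume.restrict (Icc (0:ℝ) 1)),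
        HasDerivAt (fun r => X t (Y r y)) (v (X t (Y s y))) s := by
  intro t ht
  obtain ⟨G, hGae, hGmeas, hGode⟩ := hYode.exists_measurable_mem
  obtain ⟨N, hNae, hNmeas, hNinv⟩ := (hinv t ht).exists_measurable_mem
  have hYN : ∀ s ∈ Icc (0:ℝ) 1, ∀ᵐ y ∂(volume : Measure (Fin d → ℝ)), Y s y ∈ N := fun s hs =>
    ae_iff.2 <| nonpos_iff_eq_zero.1 <| (hYpush s hs _ hNmeas.compl).trans_eq <| by
      rw [mem_ae_iff.1 hNae, mul_zero]
  have hcont : ∀ y ∈ G, ContinuousOn (fun s => Y s y) (Icc 0 1) := fun y hy =>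
    (lipschitzOnWith_of_sub_eq_integral (fun r => hvbdd _) (hGode y hy).2).continuousOn
  filter_upwards [hGae, ae_ae_mem_of_forall_ae_mem zero_le_one hYmeas hGmeas hGae hcont hNmeas hYN]
    with y hy hyN
  have hint : IntervalIntegrable (fun r => v (Y r y)) volume 0 1 :=
    (intervalIntegrable_iff_integrableOn_Icc_of_le zero_le_one).2 <|
      IntegrableOn.of_bound measure_Icc_lt_top
        (hvmeas.comp_aemeasurable
          ((hcont y hy).aemeasurable measurableSet_Icc)).aestronglyMeasurable
        Cv (ae_of_all _ fun r => hvbdd _)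
  filter_upwards [hyN, ae_hasDerivAt_of_sub_eq_integral hint
    fun c hc => (hGode y hy).2 0 c le_rfl hc.1 hc.2] with s hsN hderiv
  obtain ⟨hdiff, hfderiv⟩ := hNinv _ hsN
  simpa only [comp_def, hfderiv] using hdiff.hasFDerivAt.comp_hasDerivAt s hderiv

/-- Let `b` be Lipschitz and bounded with flow `X`, and `v` bounded with
regular Lagrangian flow `Y`. If for every `t ∈ [0,1]` one has
`(∇X_t · v)(X_{−t}(x)) = v(x)` a.e. (equivalently, `∇X_t(x)·v(x) = v(X_t(x))` a.e.),
then for a.e. `y` and a.e. `s ∈ [0,1]` the map `s ↦ X_t(Y_s(y))` is differentiable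
with derivative `v(X_t(Y_s(y)))`. -/
theorem flow_image_of_integral_curves (d : ℕ) (K : NNReal) (Cb Cv C : ℝ)
    (b v : (Fin d → ℝ) → (Fin d → ℝ))
    (X : ℝ → (Fin d → ℝ) → (Fin d → ℝ)) (Y : ℝ → (Fin d → ℝ) → (Fin d → ℝ))
    (hb : LipschitzWith K b) (hbbdd : ∀ x, ‖b x‖ ≤ Cb) (hvbdd : ∀ x, ‖v x‖ ≤ Cv)
    (hvmeas : Measurable v)
    (hflow : ∀ t x, HasDerivAt (fun s => X s x) (b (X t x)) t)
    (hX0 : ∀ x, X 0 x = x)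
    (hYmeas : ∀ s, Measurable (Y s))
    (hYode : ∀ᵐ y ∂(volume : Measure (Fin d → ℝ)), Y 0 y = y ∧
      ∀ a c : ℝ, 0 ≤ a → a ≤ c → c ≤ 1 →
        Y c y - Y a y = ∫ r in a..c, v (Y r y))
    (hYpush : ∀ s ∈ Icc (0:ℝ) 1, ∀ A : Set (Fin d → ℝ), MeasurableSet A →
      volume ((Y s) ⁻¹' A) ≤ ENNReal.ofReal C * volume A)
    (hinv : ∀ t ∈ Icc (0:ℝ) 1, ∀ᵐ x ∂(volume : Measure (Fin d → ℝ)),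
      DifferentiableAt ℝ (X t) x ∧ fderiv ℝ (X t) x (v x) = v (X t x)) :
    ∀ t ∈ Icc (0:ℝ) 1, ∀ᵐ y ∂(volume : Measure (Fin d → ℝ)),
      ∀ᵐ s ∂(volume.restrict (Icc (0:ℝ) 1)),
        HasDerivAt (fun r => X t (Y r y)) (v (X t (Y s y))) s :=
  flow_image_of_integral_curves_general d Cv C v X Y hvbdd hvmeas hYmeas hYode hYpush hinv
end

section
/- Let X_t : ℝ^d → ℝ^d be Lipschitz and let γ ∈ Lip([0,1]; ℝ^d). Suppose for a.e. s ∈ [0,1] that γ'(s) = |γ'(s)| τ(γ(s)) for a unit vector field τ, and that X_t is differentiable at γ(s) in the direction τ(γ(s)). Then s ↦ X_t(γ(s)) is differentiable at a.e. s with derivative DX_t(γ(s))[|γ'(s)| τ(γ(s))], and consequently the length of the curve X_t ∘ γ equals ∫_0^1 |DX_t(γ(s))[γ'(s)]| ds. -/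
open MeasureTheory Set Filter

open Topology in
lemma aux_chain {E : Type*} [NormedAddCommGroup E] [NormedSpace ℝ E]
    {K : NNReal} {F : E → E} (hF : LipschitzWith K F)
    {γ : ℝ → E} {s : ℝ} {v u DD : E} {c : ℝ}
    (hd : HasDerivAt γ v s) (hv : v = c • u)
    (hdir : Tendsto (fun h : ℝ => h⁻¹ • (F (γ s + h • u) - F (γ s)))
      (nhdsWithin 0 {0}ᶜ) (nhds DD)) :
    HasDerivAt (fun r => F (γ r)) (c • DD) s := by
  rw [hasDerivAt_iff_tendsto_slope]
  set A : ℝ → E := fun t => (t - s)⁻¹ • (F (γ t) - F (γ s + (t - s) • v)) with hA_def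
  have hslope : Tendsto (fun t => slope γ s t - v) (𝓝[≠] s) (𝓝 0) := by
    simpa using (hasDerivAt_iff_tendsto_slope.mp hd).sub_const v
  have hA : Tendsto A (𝓝[≠] s) (𝓝 0) := by
    refine squeeze_zero_norm' (a := fun t => (K : ℝ) * ‖slope γ s t - v‖) ?_ ?_
    · filter_upwards [self_mem_nhdsWithin] with t (ht : t ≠ s)
      have hts : t - s ≠ 0 := sub_ne_zero.mpr ht
      have h1 : ‖A t‖ = |t - s|⁻¹ * ‖F (γ t) - F (γ s + (t - s) • v)‖ := by
        rw [hA_def]; simp [norm_smul, abs_inv]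
      have h2 : ‖F (γ t) - F (γ s + (t - s) • v)‖ ≤ K * ‖γ t - (γ s + (t - s) • v)‖ := by
        simpa [dist_eq_norm] using hF.dist_le_mul (γ t) (γ s + (t - s) • v)
      have h3 : slope γ s t - v = (t - s)⁻¹ • (γ t - (γ s + (t - s) • v)) := by
        rw [slope_def_module]
        simp only [smul_sub, smul_add, smul_smul, inv_mul_cancel₀ hts, one_smul]
        abel
      rw [h1, h3, norm_smul, norm_inv, Real.norm_eq_abs]
      calc |t - s|⁻¹ * ‖F (γ t) - F (γ s + (t - s) • v)‖
          ≤ |t - s|⁻¹ * (K * ‖γ t - (γ s + (t - s) • v)‖) := by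
            apply mul_le_mul_of_nonneg_left h2 (by positivity)
        _ = K * (|t - s|⁻¹ * ‖γ t - (γ s + (t - s) • v)‖) := by ring
    · have : Tendsto (fun t => ‖slope γ s t - v‖) (𝓝[≠] s) (𝓝 0) := by
        simpa using hslope.norm
      simpa using this.const_mul (K : ℝ)
  rcases eq_or_ne c 0 with hc | hc
  · subst hc
    have hv0 : v = 0 := by simpa using hv
    refine (hA.congr' ?_).mono_right (by simp)
    filter_upwards [self_mem_nhdsWithin] with t _
    rw [hA_def, slope_def_module, hv0]
    simp
  · set g : ℝ → E := fun h => h⁻¹ • (F (γ s + h • u) - F (γ s)) with hg_def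
    have h0 : Tendsto (fun t : ℝ => c * (t - s)) (𝓝 s) (𝓝 0) := by
      have : Tendsto (fun t : ℝ => c * (t - s)) (𝓝 s) (𝓝 (c * (s - s))) :=
        (tendsto_id.sub tendsto_const_nhds).const_mul c
      simpa using this
    have hmap : Tendsto (fun t => c * (t - s)) (𝓝[≠] s) (𝓝[≠] 0) := by
      refine tendsto_nhdsWithin_of_tendsto_nhds_of_eventually_within _
        (h0.mono_left nhdsWithin_le_nhds) ?_
      filter_upwards [self_mem_nhdsWithin] with t (ht : t ≠ s)
      simpa using mul_ne_zero hc (sub_ne_zero.mpr ht)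
    have hB : Tendsto (fun t => A t + c • g (c * (t - s))) (𝓝[≠] s) (𝓝 (0 + c • DD)) :=
      hA.add ((hdir.comp hmap).const_smul c)
    rw [show c • DD = 0 + c • DD by rw [zero_add]]
    refine hB.congr' ?_
    filter_upwards [self_mem_nhdsWithin] with t (ht : t ≠ s)
    have hts : t - s ≠ 0 := sub_ne_zero.mpr ht
    have hcts : c * (t - s) ≠ 0 := mul_ne_zero hc hts
    have hBeq : c • g (c * (t - s)) = (t - s)⁻¹ • (F (γ s + (t - s) • v) - F (γ s)) := by
      rw [hg_def]
      have : (c * (t - s)) • u = (t - s) • v := by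
        rw [hv, smul_smul]; ring_nf
      simp only [smul_smul, this]
      congr 1
      field_simp
      try ring
    rw [hBeq, hA_def, slope_def_module]
    simp only [smul_sub]
    try abel

/-- Let `X_t = F` be Lipschitz and `γ` a Lipschitz curve with a.e.
derivative `γ'(s) = |γ'(s)| τ(γ(s))` for a unit vector field `τ`, such that `F` is
differentiable at `γ(s)` in the direction `τ(γ(s))` with directional derivative
`D(s) = DX_t(γ(s))[τ(γ(s))]` for a.e. `s`. Then `s ↦ F(γ(s))` is differentiable
at a.e. `s` with derivative `DX_t(γ(s))[|γ'(s)| τ(γ(s))] = |γ'(s)| • D(s)`, and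
the length of `F ∘ γ` equals `∫_0^1 |DX_t(γ(s))[γ'(s)]| ds`. -/
theorem lipschitz_image_of_curve_derivative_and_length (d : ℕ) (K L : NNReal)
    (F : (Fin d → ℝ) → (Fin d → ℝ))
    (γ γ' τγ D : ℝ → (Fin d → ℝ)) (τ : (Fin d → ℝ) → (Fin d → ℝ))
    (hF : LipschitzWith K F)
    (hγ : LipschitzOnWith L γ (Icc (0:ℝ) 1))
    (hγ' : ∀ᵐ s ∂(volume.restrict (Icc (0:ℝ) 1)), HasDerivAt γ (γ' s) s)
    (hτunit : ∀ᵐ s ∂(volume.restrict (Icc (0:ℝ) 1)), ‖τ (γ s)‖ = 1)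
    (hdir : ∀ᵐ s ∂(volume.restrict (Icc (0:ℝ) 1)),
      γ' s = ‖γ' s‖ • τ (γ s) ∧
      Tendsto (fun h : ℝ => h⁻¹ • (F (γ s + h • τ (γ s)) - F (γ s)))
        (nhdsWithin 0 {0}ᶜ) (nhds (D s))) :
    (∀ᵐ s ∂(volume.restrict (Icc (0:ℝ) 1)),
      HasDerivAt (fun r => F (γ r)) (‖γ' s‖ • D s) s) ∧
    (∫ s in (0:ℝ)..1, ‖deriv (fun r => F (γ r)) s‖)
      = ∫ s in (0:ℝ)..1, ‖(‖γ' s‖ • D s)‖ := by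
  have main : ∀ᵐ s ∂(volume.restrict (Icc (0:ℝ) 1)),
      HasDerivAt (fun r => F (γ r)) (‖γ' s‖ • D s) s := by
    filter_upwards [hγ', hdir] with s h1 h2
    exact aux_chain hF h1 h2.1 h2.2
  refine ⟨main, ?_⟩
  apply intervalIntegral.integral_congr_ae
  have main' := (ae_restrict_iff' measurableSet_Icc).mp main
  filter_upwards [main'] with s hs hsI
  rw [Set.uIoc_of_le (by norm_num : (0:ℝ) ≤ 1)] at hsI
  have hmem : s ∈ Icc (0:ℝ) 1 := Ioc_subset_Icc_self hsI
  rw [(hs hmem).deriv]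
end

section
/- For smooth vector fields b, v : ℝ^d → ℝ^d with v integrable, the 1-current identity ℒ_b(T_v) = ((div b) v − [b,v]) ℒ^d holds, where T_v := v ℒ^d and ℒ_b T := −∂(b ∧ T) − b ∧ ∂T. -/
open scoped BigOperators


open MeasureTheory

section helpers
variable {d : ℕ}

lemma my_int_left {f g : (Fin d → ℝ) → ℝ} (hf : Continuous f) (hg : Continuous g)
    (hcs : HasCompactSupport f) : Integrable (fun x => f x * g x) :=
  (hf.mul hg).integrable_of_hasCompactSupport hcs.mul_right

lemma my_int_right {f g : (Fin d → ℝ) → ℝ} (hf : Continuous f) (hg : Continuous g)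
    (hcs : HasCompactSupport g) : Integrable (fun x => f x * g x) :=
  (hf.mul hg).integrable_of_hasCompactSupport hcs.mul_left

lemma my_ibp {f g : (Fin d → ℝ) → ℝ} (hf : ContDiff ℝ (⊤ : ℕ∞) f) (hg : ContDiff ℝ (⊤ : ℕ∞) g)
    (hcs : HasCompactSupport f) (w : Fin d → ℝ) :
    ∫ x, fderiv ℝ f x w * g x = - ∫ x, f x * fderiv ℝ g x w := by
  have hfc : Continuous fun x => fderiv ℝ f x w :=
    (hf.continuous_fderiv (by simp)).clm_apply continuous_const
  have hgc : Continuous fun x => fderiv ℝ g x w :=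
    (hg.continuous_fderiv (by simp)).clm_apply continuous_const
  have hcs' : HasCompactSupport fun x => fderiv ℝ f x w :=
    (hcs.fderiv ℝ).comp_left (g := fun L : (Fin d → ℝ) →L[ℝ] ℝ => L w) rfl
  have := integral_mul_fderiv_eq_neg_fderiv_mul_of_integrable
    (my_int_left hfc hg.continuous hcs') (my_int_left hf.continuous hgc hcs)
    (my_int_left hf.continuous hg.continuous hcs)
    (fun x _ => hf.differentiable (by simp) x) (fun x _ => hg.differentiable (by simp) x)
  linarith

lemma my_fderiv_pi_apply {F : (Fin d → ℝ) → (Fin d → ℝ)} (hF : ContDiff ℝ (⊤ : ℕ∞) F)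
    (x u : Fin d → ℝ) (i : Fin d) :
    fderiv ℝ F x u i = ∑ j : Fin d, u j * fderiv ℝ (fun y => F y i) x (Pi.single j 1) := by
  have hdiff : ∀ k, DifferentiableAt ℝ (fun y => F y k) x := fun k =>
    ((contDiff_pi.mp hF k).differentiable (by simp)) x
  rw [fderiv_pi hdiff]
  have hu : u = ∑ j : Fin d, u j • (Pi.single j 1 : Fin d → ℝ) := by
    ext k; simp [Finset.sum_apply, Pi.single_apply]
  conv_lhs => rw [hu]
  rw [map_sum]
  simp [smul_eq_mul]

lemma my_fderiv_mul {p q : (Fin d → ℝ) → ℝ} (hp : ContDiff ℝ (⊤ : ℕ∞) p) (hq : ContDiff ℝ (⊤ : ℕ∞) q)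
    (x w : Fin d → ℝ) :
    fderiv ℝ (fun y => p y * q y) x w = p x * fderiv ℝ q x w + q x * fderiv ℝ p x w := by
  rw [fderiv_fun_mul ((hp.differentiable (by simp)) x) ((hq.differentiable (by simp)) x)]
  simp [smul_eq_mul]

end helpers

/-- For smooth vector fields `b, v : ℝ^d → ℝ^d` with `v` integrable,
the 1-current identity `ℒ_b(T_v) = ((div b) v − [b,v]) ℒ^d` holds, where
`T_v := v ℒ^d`, `ℒ_b T := −∂(b ∧ T) − b ∧ ∂T`, `∂T_v = −(div v)ℒ^d`, and
`⟨b ∧ v, dx^j ∧ dx^i⟩ = b^j v^i − b^i v^j`. Tested against a 1-form `ω = Σ a_i dx^i`,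
it reads: `−⟨(b∧v)ℒ^d, dω⟩ + ∫ (div v)⟨b,ω⟩ = ∫ ⟨(div b) v − [b,v], ω⟩`. -/
theorem lie_derivative_of_current_eq (d : ℕ)
    (b v : (Fin d → ℝ) → (Fin d → ℝ))
    (hb : ContDiff ℝ (⊤ : ℕ∞) b) (hv : ContDiff ℝ (⊤ : ℕ∞) v)
    (hvint : MeasureTheory.Integrable v) :
    ∀ a : (Fin d → ℝ) → (Fin d → ℝ), ContDiff ℝ (⊤ : ℕ∞) a → HasCompactSupport a →
      (-∫ x, ∑ i : Fin d, ∑ j : Fin d,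
          fderiv ℝ (fun y => a y i) x (Pi.single j 1)
            * (b x j * v x i - b x i * v x j))
        + (∫ x, (∑ j : Fin d, fderiv ℝ (fun y => v y j) x (Pi.single j 1))
            * (∑ i : Fin d, b x i * a x i))
      = ∫ x, ∑ i : Fin d,
          ((∑ j : Fin d, fderiv ℝ (fun y => b y j) x (Pi.single j 1)) * v x i
            - (fderiv ℝ b x (v x) i - fderiv ℝ v x (b x) i)) * a x i := by
  intro a ha hacs
  -- components
  have hbi : ∀ i, ContDiff ℝ (⊤ : ℕ∞) (fun y => b y i) := fun i => contDiff_pi.mp hb i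
  have hvi : ∀ i, ContDiff ℝ (⊤ : ℕ∞) (fun y => v y i) := fun i => contDiff_pi.mp hv i
  have hai : ∀ i, ContDiff ℝ (⊤ : ℕ∞) (fun y => a y i) := fun i => contDiff_pi.mp ha i
  have hacsi : ∀ i, HasCompactSupport (fun y => a y i) := fun i =>
    hacs.comp_left (g := fun w : Fin d → ℝ => w i) rfl
  have hdb : ∀ i j, Continuous (fun x => fderiv ℝ (fun y => b y i) x (Pi.single j 1)) :=
    fun i j => ((hbi i).continuous_fderiv (by simp)).clm_apply continuous_const
  have hdv : ∀ i j, Continuous (fun x => fderiv ℝ (fun y => v y i) x (Pi.single j 1)) :=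
    fun i j => ((hvi i).continuous_fderiv (by simp)).clm_apply continuous_const
  have hda : ∀ i j, Continuous (fun x => fderiv ℝ (fun y => a y i) x (Pi.single j 1)) :=
    fun i j => ((hai i).continuous_fderiv (by simp)).clm_apply continuous_const
  have hdacs : ∀ i j, HasCompactSupport (fun x => fderiv ℝ (fun y => a y i) x (Pi.single j 1)) :=
    fun i j => ((hacsi i).fderiv ℝ).comp_left (g := fun L : (Fin d → ℝ) →L[ℝ] ℝ => L (Pi.single j 1)) rfl
  have hbc : ∀ i, Continuous (fun x => b x i) := fun i => (hbi i).continuous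
  have hvc : ∀ i, Continuous (fun x => v x i) := fun i => (hvi i).continuous
  have hac : ∀ i, Continuous (fun x => a x i) := fun i => (hai i).continuous
  -- Step A : split first integral into sums
  have hA : (∫ x, ∑ i : Fin d, ∑ j : Fin d,
        fderiv ℝ (fun y => a y i) x (Pi.single j 1) * (b x j * v x i - b x i * v x j))
      = ∑ i : Fin d, ∑ j : Fin d, ∫ x,
        fderiv ℝ (fun y => a y i) x (Pi.single j 1) * (b x j * v x i - b x i * v x j) := by
    rw [integral_finset_sum]
    · exact Finset.sum_congr rfl fun i _ => integral_finset_sum _ fun j _ =>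
        my_int_left (hda i j) (((hbc j).mul (hvc i)).sub ((hbc i).mul (hvc j))) (hdacs i j)
    · intro i _
      exact integrable_finset_sum _ fun j _ =>
        my_int_left (hda i j) (((hbc j).mul (hvc i)).sub ((hbc i).mul (hvc j))) (hdacs i j)
  -- Step B : split second integral
  have hB : (∫ x, (∑ j : Fin d, fderiv ℝ (fun y => v y j) x (Pi.single j 1))
        * (∑ i : Fin d, b x i * a x i))
      = ∑ i : Fin d, ∑ j : Fin d, ∫ x,
        fderiv ℝ (fun y => v y j) x (Pi.single j 1) * (b x i * a x i) := by
    have : ∀ x, (∑ j : Fin d, fderiv ℝ (fun y => v y j) x (Pi.single j 1))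
        * (∑ i : Fin d, b x i * a x i)
        = ∑ i : Fin d, ∑ j : Fin d,
          fderiv ℝ (fun y => v y j) x (Pi.single j 1) * (b x i * a x i) := by
      intro x
      rw [Finset.sum_mul_sum, Finset.sum_comm]
    simp_rw [this]
    rw [integral_finset_sum]
    · exact Finset.sum_congr rfl fun i _ => integral_finset_sum _ fun j _ =>
        my_int_right (hdv j j) ((hbc i).mul (hac i)) (((hacsi i).mul_left))
    · intro i _
      exact integrable_finset_sum _ fun j _ =>
        my_int_right (hdv j j) ((hbc i).mul (hac i)) (((hacsi i).mul_left))
  -- Step C : rewrite RHS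
  have hC : (∫ x, ∑ i : Fin d,
        ((∑ j : Fin d, fderiv ℝ (fun y => b y j) x (Pi.single j 1)) * v x i
          - (fderiv ℝ b x (v x) i - fderiv ℝ v x (b x) i)) * a x i)
      = ∑ i : Fin d, ∑ j : Fin d, ∫ x,
        (fderiv ℝ (fun y => b y j) x (Pi.single j 1) * v x i
          - v x j * fderiv ℝ (fun y => b y i) x (Pi.single j 1)
          + b x j * fderiv ℝ (fun y => v y i) x (Pi.single j 1)) * a x i := by
    have : ∀ x, ∑ i : Fin d,
        ((∑ j : Fin d, fderiv ℝ (fun y => b y j) x (Pi.single j 1)) * v x i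
          - (fderiv ℝ b x (v x) i - fderiv ℝ v x (b x) i)) * a x i
        = ∑ i : Fin d, ∑ j : Fin d,
        (fderiv ℝ (fun y => b y j) x (Pi.single j 1) * v x i
          - v x j * fderiv ℝ (fun y => b y i) x (Pi.single j 1)
          + b x j * fderiv ℝ (fun y => v y i) x (Pi.single j 1)) * a x i := by
      intro x
      refine Finset.sum_congr rfl fun i _ => ?_
      rw [my_fderiv_pi_apply hb x (v x) i, my_fderiv_pi_apply hv x (b x) i,
        ← Finset.sum_mul, Finset.sum_add_distrib, Finset.sum_sub_distrib,
        ← Finset.sum_mul]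
      ring
    simp_rw [this]
    rw [integral_finset_sum]
    · exact Finset.sum_congr rfl fun i _ => integral_finset_sum _ fun j _ =>
        my_int_right ((((hdb j j).mul (hvc i)).sub ((hvc j).mul (hdb i j))).add
          ((hbc j).mul (hdv i j))) (hac i) (hacsi i)
    · intro i _
      exact integrable_finset_sum _ fun j _ =>
        my_int_right ((((hdb j j).mul (hvc i)).sub ((hvc j).mul (hdb i j))).add
          ((hbc j).mul (hdv i j))) (hac i) (hacsi i)
  rw [hA, hB, hC, ← Finset.sum_neg_distrib, ← Finset.sum_add_distrib]
  refine Finset.sum_congr rfl fun i _ => ?_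
  rw [← Finset.sum_neg_distrib, ← Finset.sum_add_distrib]
  refine Finset.sum_congr rfl fun j _ => ?_
  -- per (i,j) identity
  -- split A_{ij}
  have hsplit : (∫ x, fderiv ℝ (fun y => a y i) x (Pi.single j 1) * (b x j * v x i - b x i * v x j))
      = (∫ x, fderiv ℝ (fun y => a y i) x (Pi.single j 1) * (b x j * v x i))
        - ∫ x, fderiv ℝ (fun y => a y i) x (Pi.single j 1) * (b x i * v x j) := by
    rw [← integral_sub (my_int_left (g := fun x => b x j * v x i) (hda i j) ((hbc j).mul (hvc i)) (hdacs i j))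
      (my_int_left (g := fun x => b x i * v x j) (hda i j) ((hbc i).mul (hvc j)) (hdacs i j))]
    congr 1; funext x; ring
  have hI1 : (∫ x, fderiv ℝ (fun y => a y i) x (Pi.single j 1) * (b x j * v x i))
      = - ∫ x, a x i * (b x j * fderiv ℝ (fun y => v y i) x (Pi.single j 1)
          + v x i * fderiv ℝ (fun y => b y j) x (Pi.single j 1)) := by
    rw [my_ibp (hai i) ((hbi j).mul (hvi i)) (hacsi i) (Pi.single j 1)]
    simp only [my_fderiv_mul (hbi j) (hvi i)]
  have hI2 : (∫ x, fderiv ℝ (fun y => a y i) x (Pi.single j 1) * (b x i * v x j))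
      = - ∫ x, a x i * (b x i * fderiv ℝ (fun y => v y j) x (Pi.single j 1)
          + v x j * fderiv ℝ (fun y => b y i) x (Pi.single j 1)) := by
    rw [my_ibp (hai i) ((hbi i).mul (hvi j)) (hacsi i) (Pi.single j 1)]
    simp only [my_fderiv_mul (hbi i) (hvi j)]
  rw [hsplit, hI1, hI2]
  -- now combine three integrals into one
  have hP : Integrable (fun x => a x i * (b x j * fderiv ℝ (fun y => v y i) x (Pi.single j 1)
      + v x i * fderiv ℝ (fun y => b y j) x (Pi.single j 1))) :=
    my_int_left (hac i) (((hbc j).mul (hdv i j)).add ((hvc i).mul (hdb j j))) (hacsi i)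
  have hQ : Integrable (fun x => a x i * (b x i * fderiv ℝ (fun y => v y j) x (Pi.single j 1)
      + v x j * fderiv ℝ (fun y => b y i) x (Pi.single j 1))) :=
    my_int_left (hac i) (((hbc i).mul (hdv j j)).add ((hvc j).mul (hdb i j))) (hacsi i)
  have hJ : Integrable (fun x => fderiv ℝ (fun y => v y j) x (Pi.single j 1) * (b x i * a x i)) :=
    my_int_right (hdv j j) ((hbc i).mul (hac i)) (hacsi i).mul_left
  have : (∫ x, (fderiv ℝ (fun y => b y j) x (Pi.single j 1) * v x i
          - v x j * fderiv ℝ (fun y => b y i) x (Pi.single j 1)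
          + b x j * fderiv ℝ (fun y => v y i) x (Pi.single j 1)) * a x i)
      = ∫ x, (a x i * (b x j * fderiv ℝ (fun y => v y i) x (Pi.single j 1)
            + v x i * fderiv ℝ (fun y => b y j) x (Pi.single j 1))
          - a x i * (b x i * fderiv ℝ (fun y => v y j) x (Pi.single j 1)
            + v x j * fderiv ℝ (fun y => b y i) x (Pi.single j 1))
          + fderiv ℝ (fun y => v y j) x (Pi.single j 1) * (b x i * a x i)) := by
    congr 1; funext x; ring
  have hPQ : Integrable (fun x => a x i * (b x j * fderiv ℝ (fun y => v y i) x (Pi.single j 1)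
      + v x i * fderiv ℝ (fun y => b y j) x (Pi.single j 1))
      - a x i * (b x i * fderiv ℝ (fun y => v y j) x (Pi.single j 1)
      + v x j * fderiv ℝ (fun y => b y i) x (Pi.single j 1))) := hP.sub hQ
  rw [this, integral_add hPQ hJ, integral_sub hP hQ]
  ring
end
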